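/- Let (Ω, 𝒜, P) be a probability space, let d, M ≥ 1, τ ≥ 1, μ > 0, G ≥ 0, 0 < η ≤ 1, and let w_1, …, w_M be nonnegative reals with Σ_m w_m = 1. Let F_m : ℝ^d → ℝ and G_m : ℝ^d → ℝ^d satisfy the μ-strong-convexity inequality 2(F_m(v) − F_m(w)) ≥ 2⟨v − w, G_m(w)⟩ + μ‖v − w‖² for all v, w ∈ ℝ^d and all m; set F = Σ_m w_m F_m, let θ* be a global minimizer of F with F* = F(θ*), suppose F_m* ≤ F_m(v) for all v and m, and set Γ = F* − Σ_m w_m F_m*. Let θ̂ : Ω → ℝ^d and g_{m,i} : Ω → ℝ^d (i ∈ {1,…,τ}) be random vectors (all integrands appearing below integrable) with E[‖g_{m,i}‖²] ≤ G², define the local iterates θ_m^i = θ̂ − η Σ_{j=1}^{i−1} g_{m,j} (so θ_m^1 = θ̂), assume the unbiasedness identities E[⟨θ* − θ_m^i, g_{m,i}⟩] = E[⟨θ* − θ_m^i, G_m(θ_m^i)⟩] for all m and all i ∈ {1,…,τ}, and define the new global model θ⁺ = θ̂ − η Σ_{m=1}^M w_m Σ_{i=1}^τ g_{m,i}. Then: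 E[‖θ⁺ − θ*‖²] ≤ (1 − μη(τ − η(τ − 1))) · E[‖θ̂ − θ*‖²] + η²(τ² + τ − 1)G² + (1 + μ(1 − η)) η² G² τ(τ−1)(2τ−1)/6 + 2η(τ − 1)Γ. -/

import Mathlib

/-!
Expanding the square, `‖θ⁺ - θ*‖² = ‖θ̂ - θ*‖² + 2η ∑ₘ wₘ ∑ᵢ ⟪θ* - θ̂, gₘᵢ⟫ + η² ‖∑ₘ wₘ ∑ᵢ gₘᵢ‖²`,
and Jensen's inequality bounds the expectation of the last term by `τ² G²`.

For the first local step `θₘ¹ = θ̂`, unbiasedness turns `gₘ₁` into `Gₘ(θ̂)`; the weighted sum of the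
strong convexity inequalities at `θ*`, together with the minimality of `θ*` for `∑ₘ wₘ Fₘ`, gives
`-(μ/2) E‖θ̂ - θ*‖²`. For a later step `i` we split `θ* - θ̂ = (θ* - θₘⁱ) + (θₘⁱ - θ̂)`. The first part
is again handled by unbiasedness and strong convexity, now only against `Fₘ ≥ Fₘ*` (this is where
`Γ` enters), with the contraction `‖θₘⁱ - θ*‖² ≥ (1 - η) ‖θ̂ - θ*‖² - η (1 - η) ‖∑_{j<i} gₘⱼ‖²`; the
drift `θₘⁱ - θ̂ = -η ∑_{j<i} gₘⱼ` is handled by Young's inequality. Both leave a multiple of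
`E‖∑_{j<i} gₘⱼ‖² ≤ (i - 1)² G²`, and `∑_{i=2}^τ (i - 1)² = τ (τ - 1) (2τ - 1) / 6`.
-/

open MeasureTheory Finset
open scoped InnerProductSpace

section Pointwise

variable {E : Type*} [NormedAddCommGroup E] [InnerProductSpace ℝ E]

/-- `grad` need not be a derivative of `F`: only the first-order inequality is assumed. -/
def StrongConvexWithGrad (μ : ℝ) (F : E → ℝ) (grad : E → E) : Prop :=
  ∀ v u, 2 * (F v - F u) ≥ 2 * ⟪v - u, grad u⟫_ℝ + μ * ‖v - u‖ ^ 2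

lemma StrongConvexWithGrad.inner_le {μ : ℝ} {F : E → ℝ} {grad : E → E}
    (hF : StrongConvexWithGrad μ F grad) (x v : E) :
    ⟪x - v, grad v⟫_ℝ ≤ F x - F v - μ / 2 * ‖v - x‖ ^ 2 := by
  have h := hF x v
  rw [norm_sub_rev] at h
  linarith

lemma StrongConvexWithGrad.sum_inner_le_of_isMinOn {ι : Type*} [Fintype ι] {μ : ℝ}
    {F : ι → E → ℝ} {grad : ι → E → E} (hF : ∀ m, StrongConvexWithGrad μ (F m) (grad m))
    {w : ι → ℝ} (hw : ∀ m, 0 ≤ w m) (hw1 : ∑ m, w m = 1) {x : E}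
    (hmin : IsMinOn (fun v => ∑ m, w m * F m v) Set.univ x) (v : E) :
    ∑ m, w m * ⟪x - v, grad m v⟫_ℝ ≤ -(μ / 2) * ‖v - x‖ ^ 2 :=
  calc ∑ m, w m * ⟪x - v, grad m v⟫_ℝ
      ≤ ∑ m, w m * (F m x - F m v - μ / 2 * ‖v - x‖ ^ 2) :=
        sum_le_sum fun m _ => mul_le_mul_of_nonneg_left ((hF m).inner_le x v) (hw m)
    _ = ∑ m, w m * F m x - ∑ m, w m * F m v - μ / 2 * ‖v - x‖ ^ 2 := by
        simp only [mul_sub, sum_sub_distrib, ← sum_mul, hw1, one_mul]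
    _ ≤ -(μ / 2) * ‖v - x‖ ^ 2 := by linarith [isMinOn_univ_iff.1 hmin v]

lemma real_inner_le_add_sq_div_two (a b : E) : ⟪a, b⟫_ℝ ≤ (‖a‖ ^ 2 + ‖b‖ ^ 2) / 2 := by
  have := norm_sub_sq_real a b
  nlinarith [sq_nonneg ‖a - b‖]

lemma norm_sub_smul_sq_ge {η : ℝ} (hη : 0 ≤ η) (a b : E) :
    (1 - η) * ‖a‖ ^ 2 - η * (1 - η) * ‖b‖ ^ 2 ≤ ‖a - η • b‖ ^ 2 := by
  rw [norm_sub_sq_real, real_inner_smul_right, norm_smul, Real.norm_of_nonneg hη, mul_pow]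
  nlinarith [mul_le_mul_of_nonneg_left (real_inner_le_add_sq_div_two a b) hη]

lemma norm_sum_sq_le_card_mul {ι F : Type*} [SeminormedAddCommGroup F] (s : Finset ι)
    (f : ι → F) : ‖∑ i ∈ s, f i‖ ^ 2 ≤ #s * ∑ i ∈ s, ‖f i‖ ^ 2 :=
  (pow_le_pow_left₀ (norm_nonneg _) (norm_sum_le s f) 2).trans (sq_sum_le_card_mul_sum_sq ..)

lemma norm_sum_smul_sq_le {ι F : Type*} [SeminormedAddCommGroup F] [NormedSpace ℝ F]
    {s : Finset ι} {w : ι → ℝ} (hw : ∀ i ∈ s, 0 ≤ w i) (hw1 : ∑ i ∈ s, w i = 1) (f : ι → F) :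
    ‖∑ i ∈ s, w i • f i‖ ^ 2 ≤ ∑ i ∈ s, w i * ‖f i‖ ^ 2 :=
  (convexOn_univ_norm.pow (fun _ _ => norm_nonneg _) 2).map_sum_le hw hw1 (fun _ _ => trivial)

lemma sum_Ioc_one_sub_one_sq (n : ℕ) :
    ∑ i ∈ Ioc 1 n, ((i : ℝ) - 1) ^ 2 = (n : ℝ) * (n - 1) * (2 * n - 1) / 6 := by
  induction n with
  | zero => simp
  | succ n ih =>
    rcases Nat.eq_zero_or_pos n with rfl | hn
    · simp
    · rw [sum_Ioc_succ_top (by omega : 1 ≤ n), ih]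
      push_cast
      ring

lemma sum_mul_le_of_le_mul_sub_add {ι : Type*} [Fintype ι] {w a u : ι → ℝ} {c K D : ℝ}
    (hw : ∀ m, 0 ≤ w m) (hw1 : ∑ m, w m = 1) (h : ∀ m, a m ≤ c * (u m - K) + D) :
    ∑ m, w m * a m ≤ c * (∑ m, w m * u m - K) + D :=
  calc ∑ m, w m * a m ≤ ∑ m, w m * (c * (u m - K) + D) :=
        sum_le_sum fun m _ => mul_le_mul_of_nonneg_left (h m) (hw m)
    _ = c * ∑ m, w m * u m - c * K * ∑ m, w m + D * ∑ m, w m := by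
        rw [mul_sum, mul_sum, mul_sum, ← sum_sub_distrib, ← sum_add_distrib]
        exact sum_congr rfl fun m _ => by ring
    _ = c * (∑ m, w m * u m - K) + D := by rw [hw1]; ring

end Pointwise

section SecondMoments

variable {Ω E : Type*} [MeasurableSpace Ω] {P : Measure Ω} [NormedAddCommGroup E]

lemma MeasureTheory.MemLp.integrable_norm_sq {f : Ω → E} (hf : MemLp f 2 P) :
    Integrable (fun ω => ‖f ω‖ ^ 2) P :=
  (memLp_two_iff_integrable_sq_norm hf.1).1 hf

lemma integral_norm_sum_sq_le {ι : Type*} {s : Finset ι} {g : ι → Ω → E} {C : ℝ}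
    (hg : ∀ j ∈ s, MemLp (g j) 2 P) (hC : ∀ j ∈ s, ∫ ω, ‖g j ω‖ ^ 2 ∂P ≤ C) :
    ∫ ω, ‖∑ j ∈ s, g j ω‖ ^ 2 ∂P ≤ (#s : ℝ) ^ 2 * C := by
  have hg2 : ∀ j ∈ s, Integrable (fun ω => ‖g j ω‖ ^ 2) P :=
    fun j hj => (hg j hj).integrable_norm_sq
  calc ∫ ω, ‖∑ j ∈ s, g j ω‖ ^ 2 ∂P
      ≤ ∫ ω, (#s : ℝ) * ∑ j ∈ s, ‖g j ω‖ ^ 2 ∂P :=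
        integral_mono (memLp_finsetSum s hg).integrable_norm_sq
          ((integrable_finsetSum s hg2).const_mul _) fun ω => norm_sum_sq_le_card_mul s _
    _ = #s * ∑ j ∈ s, ∫ ω, ‖g j ω‖ ^ 2 ∂P := by
        rw [integral_const_mul, integral_finsetSum s hg2]
    _ ≤ #s * ∑ _j ∈ s, C := by gcongr with j hj; exact hC j hj
    _ = (#s : ℝ) ^ 2 * C := by rw [sum_const, nsmul_eq_mul]; ring

lemma memLp_sum_smul_sum {ι κ : Type*} [Fintype ι] [NormedSpace ℝ E] {t : Finset κ} (w : ι → ℝ)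
    {g : ι → κ → Ω → E} (hg : ∀ m, ∀ i ∈ t, MemLp (g m i) 2 P) :
    MemLp (fun ω => ∑ m, w m • ∑ i ∈ t, g m i ω) 2 P :=
  memLp_finsetSum _ fun m _ => (memLp_finsetSum t (hg m)).const_smul (w m)

lemma integral_norm_sum_smul_sum_sq_le {ι κ : Type*} [Fintype ι] [NormedSpace ℝ E]
    {t : Finset κ} {w : ι → ℝ} (hw : ∀ m, 0 ≤ w m) (hw1 : ∑ m, w m = 1)
    {g : ι → κ → Ω → E} {C : ℝ} (hg : ∀ m, ∀ i ∈ t, MemLp (g m i) 2 P)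
    (hC : ∀ m, ∀ i ∈ t, ∫ ω, ‖g m i ω‖ ^ 2 ∂P ≤ C) :
    ∫ ω, ‖∑ m, w m • ∑ i ∈ t, g m i ω‖ ^ 2 ∂P ≤ (#t : ℝ) ^ 2 * C := by
  have hsum : ∀ m, Integrable (fun ω => ‖∑ i ∈ t, g m i ω‖ ^ 2) P :=
    fun m => (memLp_finsetSum t (hg m)).integrable_norm_sq
  calc ∫ ω, ‖∑ m, w m • ∑ i ∈ t, g m i ω‖ ^ 2 ∂P
      ≤ ∫ ω, ∑ m, w m * ‖∑ i ∈ t, g m i ω‖ ^ 2 ∂P :=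
        integral_mono (memLp_sum_smul_sum w hg).integrable_norm_sq
          (integrable_finsetSum _ fun m _ => (hsum m).const_mul _)
          fun ω => norm_sum_smul_sq_le (fun m _ => hw m) hw1 _
    _ = ∑ m, w m * ∫ ω, ‖∑ i ∈ t, g m i ω‖ ^ 2 ∂P := by
        rw [integral_finsetSum _ fun m _ => (hsum m).const_mul _]
        simp only [integral_const_mul]
    _ ≤ ∑ m, w m * ((#t : ℝ) ^ 2 * C) := by
        gcongr with m
        · exact hw m
        · exact integral_norm_sum_sq_le (hg m) (hC m)
    _ = (#t : ℝ) ^ 2 * C := by rw [← sum_mul, hw1, one_mul]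

end SecondMoments

section LocalSGD

variable {Ω E : Type*} [MeasurableSpace Ω] {P : Measure Ω}
  [NormedAddCommGroup E] [InnerProductSpace ℝ E]

lemma integral_norm_sub_smul_sub_sq {θ S : Ω → E} {x : E} (η : ℝ)
    (hθ : Integrable (fun ω => ‖θ ω - x‖ ^ 2) P)
    (hθS : Integrable (fun ω => ⟪x - θ ω, S ω⟫_ℝ) P)
    (hS : Integrable (fun ω => ‖S ω‖ ^ 2) P) :
    ∫ ω, ‖θ ω - η • S ω - x‖ ^ 2 ∂P
      = ∫ ω, ‖θ ω - x‖ ^ 2 ∂P + 2 * η * ∫ ω, ⟪x - θ ω, S ω⟫_ℝ ∂P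
        + η ^ 2 * ∫ ω, ‖S ω‖ ^ 2 ∂P := by
  have hpt : ∀ ω, ‖θ ω - η • S ω - x‖ ^ 2
      = ‖θ ω - x‖ ^ 2 + 2 * η * ⟪x - θ ω, S ω⟫_ℝ + η ^ 2 * ‖S ω‖ ^ 2 := fun ω => by
    rw [sub_right_comm, norm_sub_sq_real, real_inner_smul_right, norm_smul, mul_pow,
      Real.norm_eq_abs, sq_abs, ← neg_sub x, inner_neg_left]
    ring
  have h₁ : Integrable (fun ω => ‖θ ω - x‖ ^ 2 + 2 * η * ⟪x - θ ω, S ω⟫_ℝ) P :=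
    hθ.add (hθS.const_mul _)
  simp only [hpt]
  rw [integral_add h₁ (hS.const_mul _), integral_add hθ (hθS.const_mul _),
    integral_const_mul, integral_const_mul]

lemma integral_norm_update_sub_sq_le {ι κ : Type*} [Fintype ι] {t : Finset κ} {w : ι → ℝ}
    (hw : ∀ m, 0 ≤ w m) (hw1 : ∑ m, w m = 1) {θ : Ω → E} {x : E} {g : ι → κ → Ω → E}
    {η C : ℝ} (hθ : Integrable (fun ω => ‖θ ω - x‖ ^ 2) P)
    (hg : ∀ m, ∀ i ∈ t, MemLp (g m i) 2 P) (hC : ∀ m, ∀ i ∈ t, ∫ ω, ‖g m i ω‖ ^ 2 ∂P ≤ C)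
    (hip : ∀ m, ∀ i ∈ t, Integrable (fun ω => ⟪x - θ ω, g m i ω⟫_ℝ) P) :
    ∫ ω, ‖θ ω - η • ∑ m, w m • ∑ i ∈ t, g m i ω - x‖ ^ 2 ∂P
      ≤ ∫ ω, ‖θ ω - x‖ ^ 2 ∂P
        + 2 * η * ∑ m, w m * ∑ i ∈ t, ∫ ω, ⟪x - θ ω, g m i ω⟫_ℝ ∂P
        + η ^ 2 * ((#t : ℝ) ^ 2 * C) := by
  have hinner : ∀ ω, ⟪x - θ ω, ∑ m, w m • ∑ i ∈ t, g m i ω⟫_ℝ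
      = ∑ m, w m * ∑ i ∈ t, ⟪x - θ ω, g m i ω⟫_ℝ := fun ω => by
    simp only [inner_sum, real_inner_smul_right]
  have hipm : ∀ m, Integrable (fun ω => w m * ∑ i ∈ t, ⟪x - θ ω, g m i ω⟫_ℝ) P :=
    fun m => (integrable_finsetSum t (hip m)).const_mul _
  have hintegral : ∫ ω, ⟪x - θ ω, ∑ m, w m • ∑ i ∈ t, g m i ω⟫_ℝ ∂P
      = ∑ m, w m * ∑ i ∈ t, ∫ ω, ⟪x - θ ω, g m i ω⟫_ℝ ∂P := by
    simp only [hinner]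
    rw [integral_finsetSum _ fun m _ => hipm m]
    simp only [integral_const_mul, integral_finsetSum t (hip _)]
  rw [integral_norm_sub_smul_sub_sq η hθ
      (by simpa only [hinner] using integrable_finsetSum _ fun m _ => hipm m)
      (memLp_sum_smul_sum w hg).integrable_norm_sq, hintegral]
  gcongr
  exact integral_norm_sum_smul_sum_sq_le hw hw1 hg hC

lemma StrongConvexWithGrad.integral_inner_le [IsProbabilityMeasure P] {μ Fmin : ℝ}
    {F : E → ℝ} {grad : E → E} (hF : StrongConvexWithGrad μ F grad) (hFmin : ∀ v, Fmin ≤ F v)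
    (x : E) {v : Ω → E} (hip : Integrable (fun ω => ⟪x - v ω, grad (v ω)⟫_ℝ) P)
    (hv : Integrable (fun ω => ‖v ω - x‖ ^ 2) P) :
    ∫ ω, ⟪x - v ω, grad (v ω)⟫_ℝ ∂P ≤ F x - Fmin - μ / 2 * ∫ ω, ‖v ω - x‖ ^ 2 ∂P :=
  calc ∫ ω, ⟪x - v ω, grad (v ω)⟫_ℝ ∂P
      ≤ ∫ ω, (F x - Fmin - μ / 2 * ‖v ω - x‖ ^ 2) ∂P :=
        integral_mono hip ((integrable_const _).sub (hv.const_mul _)) fun ω =>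
          (hF.inner_le x (v ω)).trans (by linarith [hFmin (v ω)])
    _ = F x - Fmin - μ / 2 * ∫ ω, ‖v ω - x‖ ^ 2 ∂P := by
        rw [integral_sub (integrable_const _) (hv.const_mul _), integral_const, integral_const_mul,
          probReal_univ, one_smul]

lemma integral_norm_sub_smul_sq_ge {η : ℝ} (hη : 0 ≤ η) {θ b v : Ω → E} {x : E}
    (hv : ∀ ω, v ω = θ ω - η • b ω) (hθ : Integrable (fun ω => ‖θ ω - x‖ ^ 2) P)
    (hb : Integrable (fun ω => ‖b ω‖ ^ 2) P) (hv2 : Integrable (fun ω => ‖v ω - x‖ ^ 2) P) :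
    (1 - η) * ∫ ω, ‖θ ω - x‖ ^ 2 ∂P - η * (1 - η) * ∫ ω, ‖b ω‖ ^ 2 ∂P
      ≤ ∫ ω, ‖v ω - x‖ ^ 2 ∂P := by
  rw [← integral_const_mul, ← integral_const_mul, ← integral_sub (hθ.const_mul _) (hb.const_mul _)]
  refine integral_mono ((hθ.const_mul _).sub (hb.const_mul _)) hv2 fun ω => ?_
  simpa only [hv, sub_right_comm] using norm_sub_smul_sq_ge hη (θ ω - x) (b ω)

lemma integral_inner_sub_le {η : ℝ} (hη : 0 ≤ η) {θ b v g : Ω → E}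
    (hv : ∀ ω, v ω = θ ω - η • b ω) (hb : Integrable (fun ω => ‖b ω‖ ^ 2) P)
    (hg : Integrable (fun ω => ‖g ω‖ ^ 2) P)
    (hvg : Integrable (fun ω => ⟪v ω - θ ω, g ω⟫_ℝ) P) :
    ∫ ω, ⟪v ω - θ ω, g ω⟫_ℝ ∂P ≤ η / 2 * (∫ ω, ‖b ω‖ ^ 2 ∂P + ∫ ω, ‖g ω‖ ^ 2 ∂P) := by
  rw [← integral_add hb hg, ← integral_const_mul]
  refine integral_mono hvg ((hb.add hg).const_mul _) fun ω => ?_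
  have hyoung := real_inner_le_add_sq_div_two (-b ω) (g ω)
  rw [norm_neg] at hyoung
  simp only [hv, sub_sub_cancel_left, ← smul_neg, real_inner_smul_left]
  nlinarith

lemma StrongConvexWithGrad.integral_inner_le_of_local_step [IsProbabilityMeasure P]
    {μ η Fmin B C : ℝ} {F : E → ℝ} {grad : E → E} (hF : StrongConvexWithGrad μ F grad)
    (hFmin : ∀ v, Fmin ≤ F v) (hμ : 0 ≤ μ) (hη0 : 0 ≤ η) (hη1 : η ≤ 1)
    {x : E} {θ b v g : Ω → E} (hv : ∀ ω, v ω = θ ω - η • b ω)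
    (hθ : Integrable (fun ω => ‖θ ω - x‖ ^ 2) P) (hb : Integrable (fun ω => ‖b ω‖ ^ 2) P)
    (hg : Integrable (fun ω => ‖g ω‖ ^ 2) P)
    (hip0 : Integrable (fun ω => ⟪x - θ ω, g ω⟫_ℝ) P)
    (hip1 : Integrable (fun ω => ⟪x - v ω, g ω⟫_ℝ) P)
    (hip2 : Integrable (fun ω => ⟪x - v ω, grad (v ω)⟫_ℝ) P)
    (hv2 : Integrable (fun ω => ‖v ω - x‖ ^ 2) P)
    (hunb : ∫ ω, ⟪x - v ω, g ω⟫_ℝ ∂P = ∫ ω, ⟪x - v ω, grad (v ω)⟫_ℝ ∂P)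
    (hbB : ∫ ω, ‖b ω‖ ^ 2 ∂P ≤ B) (hgC : ∫ ω, ‖g ω‖ ^ 2 ∂P ≤ C) :
    ∫ ω, ⟪x - θ ω, g ω⟫_ℝ ∂P
      ≤ F x - Fmin - μ / 2 * ((1 - η) * ∫ ω, ‖θ ω - x‖ ^ 2 ∂P - η * (1 - η) * B)
        + η / 2 * (B + C) := by
  have hsplit : ∀ ω, ⟪x - θ ω, g ω⟫_ℝ = ⟪x - v ω, g ω⟫_ℝ + ⟪v ω - θ ω, g ω⟫_ℝ := fun ω => by
    rw [← inner_add_left, sub_add_sub_cancel]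
  have hvg : Integrable (fun ω => ⟪v ω - θ ω, g ω⟫_ℝ) P :=
    (hip0.sub hip1).congr (.of_forall fun ω => by simp only [Pi.sub_apply, hsplit]; ring)
  have hgrad := hF.integral_inner_le hFmin x hip2 hv2
  have hlow := integral_norm_sub_smul_sq_ge hη0 hv hθ hb hv2
  have hcross := integral_inner_sub_le hη0 hv hb hg hvg
  have hμη : 0 ≤ μ / 2 * (η * (1 - η)) := by have := sub_nonneg.2 hη1; positivity
  have hbB' := mul_le_mul_of_nonneg_left hbB hμη
  have hcross' := mul_le_mul_of_nonneg_left (add_le_add hbB hgC) (by positivity : 0 ≤ η / 2)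
  have hlow' := mul_le_mul_of_nonneg_left hlow (by positivity : 0 ≤ μ / 2)
  rw [integral_congr_ae (.of_forall hsplit), integral_add hip1 hvg, hunb]
  linarith

lemma StrongConvexWithGrad.sum_integral_inner_le_of_local_steps [IsProbabilityMeasure P]
    {μ η Fmin C : ℝ} {F : E → ℝ} {grad : E → E} (hF : StrongConvexWithGrad μ F grad)
    (hFmin : ∀ v, Fmin ≤ F v) (hμ : 0 ≤ μ) (hη0 : 0 ≤ η) (hη1 : η ≤ 1) {τ : ℕ} (hτ : 1 ≤ τ)
    {x : E} {θ : Ω → E} {g θloc : ℕ → Ω → E}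
    (hθloc : ∀ i ω, θloc i ω = θ ω - η • ∑ j ∈ Icc 1 (i - 1), g j ω)
    (hθ : Integrable (fun ω => ‖θ ω - x‖ ^ 2) P)
    (hg : ∀ i ∈ Icc 1 τ, MemLp (g i) 2 P) (hgC : ∀ i ∈ Icc 1 τ, ∫ ω, ‖g i ω‖ ^ 2 ∂P ≤ C)
    (hip0 : ∀ i ∈ Icc 1 τ, Integrable (fun ω => ⟪x - θ ω, g i ω⟫_ℝ) P)
    (hip1 : ∀ i ∈ Icc 1 τ, Integrable (fun ω => ⟪x - θloc i ω, g i ω⟫_ℝ) P)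
    (hip2 : ∀ i ∈ Icc 1 τ, Integrable (fun ω => ⟪x - θloc i ω, grad (θloc i ω)⟫_ℝ) P)
    (hloc2 : ∀ i ∈ Icc 1 τ, Integrable (fun ω => ‖θloc i ω - x‖ ^ 2) P)
    (hunb : ∀ i ∈ Icc 1 τ,
      ∫ ω, ⟪x - θloc i ω, g i ω⟫_ℝ ∂P = ∫ ω, ⟪x - θloc i ω, grad (θloc i ω)⟫_ℝ ∂P) :
    ∑ i ∈ Ioc 1 τ, ∫ ω, ⟪x - θ ω, g i ω⟫_ℝ ∂P
      ≤ (τ - 1) * (F x - Fmin - μ / 2 * (1 - η) * ∫ ω, ‖θ ω - x‖ ^ 2 ∂P)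
        + ((μ / 2 * η * (1 - η) + η / 2) * C * (τ * (τ - 1) * (2 * τ - 1) / 6)
          + η / 2 * C * (τ - 1)) := by
  set A := ∫ ω, ‖θ ω - x‖ ^ 2 ∂P
  have hstep : ∀ i ∈ Ioc 1 τ, ∫ ω, ⟪x - θ ω, g i ω⟫_ℝ ∂P
      ≤ (F x - Fmin - μ / 2 * (1 - η) * A + η / 2 * C)
        + (μ / 2 * η * (1 - η) + η / 2) * C * ((i : ℝ) - 1) ^ 2 := by
    intro i hi
    have hi' : i ∈ Icc 1 τ := Ioc_subset_Icc_self hi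
    have hsub : Icc 1 (i - 1) ⊆ Icc 1 τ :=
      Icc_subset_Icc le_rfl (by simp only [mem_Ioc] at hi; omega)
    have hB := integral_norm_sum_sq_le (fun j hj => hg j (hsub hj)) (fun j hj => hgC j (hsub hj))
    rw [Nat.card_Icc, add_tsub_cancel_right, Nat.cast_sub (mem_Icc.1 hi').1, Nat.cast_one] at hB
    have := hF.integral_inner_le_of_local_step hFmin hμ hη0 hη1 (hθloc i) hθ
      (memLp_finsetSum _ fun j hj => hg j (hsub hj)).integrable_norm_sq
      (hg i hi').integrable_norm_sq (hip0 i hi') (hip1 i hi') (hip2 i hi') (hloc2 i hi')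
      (hunb i hi') hB (hgC i hi')
    linarith
  calc ∑ i ∈ Ioc 1 τ, ∫ ω, ⟪x - θ ω, g i ω⟫_ℝ ∂P
      ≤ ∑ i ∈ Ioc 1 τ, ((F x - Fmin - μ / 2 * (1 - η) * A + η / 2 * C)
        + (μ / 2 * η * (1 - η) + η / 2) * C * ((i : ℝ) - 1) ^ 2) := sum_le_sum hstep
    _ = (τ - 1) * (F x - Fmin - μ / 2 * (1 - η) * A + η / 2 * C)
        + (μ / 2 * η * (1 - η) + η / 2) * C * (τ * (τ - 1) * (2 * τ - 1) / 6) := by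
      rw [sum_add_distrib, sum_const, ← mul_sum, sum_Ioc_one_sub_one_sq, Nat.card_Ioc,
        nsmul_eq_mul, Nat.cast_sub hτ, Nat.cast_one]
    _ = _ := by ring

lemma StrongConvexWithGrad.sum_integral_inner_le_of_isMinOn {ι : Type*} [Fintype ι] {μ : ℝ}
    {F : ι → E → ℝ} {grad : ι → E → E} (hF : ∀ m, StrongConvexWithGrad μ (F m) (grad m))
    {w : ι → ℝ} (hw : ∀ m, 0 ≤ w m) (hw1 : ∑ m, w m = 1) {x : E}
    (hmin : IsMinOn (fun v => ∑ m, w m * F m v) Set.univ x) {θ : Ω → E}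
    (hθ : Integrable (fun ω => ‖θ ω - x‖ ^ 2) P)
    (hip : ∀ m, Integrable (fun ω => ⟪x - θ ω, grad m (θ ω)⟫_ℝ) P) :
    ∑ m, w m * ∫ ω, ⟪x - θ ω, grad m (θ ω)⟫_ℝ ∂P ≤ -(μ / 2) * ∫ ω, ‖θ ω - x‖ ^ 2 ∂P := by
  simp only [← integral_const_mul]
  rw [← integral_finsetSum _ fun m _ => (hip m).const_mul _]
  exact integral_mono (integrable_finsetSum _ fun m _ => (hip m).const_mul _) (hθ.const_mul _)
    fun ω => StrongConvexWithGrad.sum_inner_le_of_isMinOn hF hw hw1 hmin (θ ω)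

end LocalSGD

theorem stmt_16_general {Ω : Type*} [MeasurableSpace Ω] (P : Measure Ω) [IsProbabilityMeasure P]
    (d M τ : ℕ) (hτ : 1 ≤ τ)
    (μ G η : ℝ) (hμ : 0 < μ) (hη0 : 0 < η) (hη1 : η ≤ 1)
    (w : Fin M → ℝ) (hw : ∀ m, 0 ≤ w m) (hw1 : ∑ m, w m = 1)
    (F : Fin M → EuclideanSpace ℝ (Fin d) → ℝ)
    (Gm : Fin M → EuclideanSpace ℝ (Fin d) → EuclideanSpace ℝ (Fin d))
    (hsc : ∀ m (v u : EuclideanSpace ℝ (Fin d)),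
      2 * (F m v - F m u) ≥ 2 * ⟪v - u, Gm m u⟫_ℝ + μ * ‖v - u‖ ^ 2)
    (θstar : EuclideanSpace ℝ (Fin d))
    (hmin : ∀ v, ∑ m, w m * F m θstar ≤ ∑ m, w m * F m v)
    (Fmin : Fin M → ℝ) (hFmin : ∀ m v, Fmin m ≤ F m v)
    (Fstar Γ : ℝ) (hFstar : Fstar = ∑ m, w m * F m θstar)
    (hΓ : Γ = Fstar - ∑ m, w m * Fmin m)
    (θh : Ω → EuclideanSpace ℝ (Fin d))
    (g : Fin M → ℕ → Ω → EuclideanSpace ℝ (Fin d))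
    -- local SGD iterates: θ_m^i = θ̂ − η Σ_{j=1}^{i−1} g_{m,j} (so θ_m^1 = θ̂)
    (θloc : Fin M → ℕ → Ω → EuclideanSpace ℝ (Fin d))
    (hθloc : ∀ m i ω, θloc m i ω = θh ω - η • ∑ j ∈ Icc 1 (i - 1), g m j ω)
    -- new global model: θ⁺ = θ̂ − η Σ_m w_m Σ_{i=1}^τ g_{m,i}
    (θplus : Ω → EuclideanSpace ℝ (Fin d))
    (hθplus : ∀ ω, θplus ω = θh ω - η • ∑ m, w m • ∑ i ∈ Icc 1 τ, g m i ω)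
    -- integrability of all integrands appearing below
    (hgint : ∀ m, ∀ i ∈ Icc 1 τ, Integrable (fun ω => g m i ω) P)
    (hg2int : ∀ m, ∀ i ∈ Icc 1 τ, Integrable (fun ω => ‖g m i ω‖ ^ 2) P)
    (hθh2int : Integrable (fun ω => ‖θh ω - θstar‖ ^ 2) P)
    (hip0int : ∀ m, ∀ i ∈ Icc 1 τ,
      Integrable (fun ω => ⟪θstar - θh ω, g m i ω⟫_ℝ) P)
    (hip1int : ∀ m, ∀ i ∈ Icc 1 τ,
      Integrable (fun ω => ⟪θstar - θloc m i ω, g m i ω⟫_ℝ) P)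
    (hip2int : ∀ m, ∀ i ∈ Icc 1 τ,
      Integrable (fun ω => ⟪θstar - θloc m i ω, Gm m (θloc m i ω)⟫_ℝ) P)
    (hloc2int : ∀ m, ∀ i ∈ Icc 1 τ,
      Integrable (fun ω => ‖θloc m i ω - θstar‖ ^ 2) P)
    -- bounded second moments of the stochastic gradients
    (hgbound : ∀ m, ∀ i ∈ Icc 1 τ, ∫ ω, ‖g m i ω‖ ^ 2 ∂P ≤ G ^ 2)
    -- unbiasedness identities
    (hunbiased : ∀ m, ∀ i ∈ Icc 1 τ,
      ∫ ω, ⟪θstar - θloc m i ω, g m i ω⟫_ℝ ∂P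
        = ∫ ω, ⟪θstar - θloc m i ω, Gm m (θloc m i ω)⟫_ℝ ∂P) :
    ∫ ω, ‖θplus ω - θstar‖ ^ 2 ∂P
      ≤ (1 - μ * η * ((τ : ℝ) - η * ((τ : ℝ) - 1))) * ∫ ω, ‖θh ω - θstar‖ ^ 2 ∂P
        + η ^ 2 * ((τ : ℝ) ^ 2 + (τ : ℝ) - 1) * G ^ 2
        + (1 + μ * (1 - η)) * η ^ 2 * G ^ 2
            * ((τ : ℝ) * ((τ : ℝ) - 1) * (2 * (τ : ℝ) - 1) / 6)
        + 2 * η * ((τ : ℝ) - 1) * Γ := by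
  set A := ∫ ω, ‖θh ω - θstar‖ ^ 2 ∂P
  have hL2 : ∀ m, ∀ i ∈ Icc 1 τ, MemLp (g m i) 2 P := fun m i hi =>
    (memLp_two_iff_integrable_sq_norm (hgint m i hi).1).2 (hg2int m i hi)
  have h1 : 1 ∈ Icc 1 τ := left_mem_Icc.2 hτ
  have hloc1 : ∀ m, θloc m 1 = θh := fun m => funext fun ω => by simp [hθloc]
  have hupdate := integral_norm_update_sub_sq_le (η := η) hw hw1 hθh2int hL2 hgbound hip0int
  simp only [← hθplus, Nat.card_Icc, add_tsub_cancel_right] at hupdate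
  have hfirst : ∑ m, w m * ∫ ω, ⟪θstar - θh ω, g m 1 ω⟫_ℝ ∂P ≤ -(μ / 2) * A := by
    have hunb1 := fun m => hunbiased m 1 h1
    have hgrad1 := fun m => hip2int m 1 h1
    simp only [hloc1] at hunb1 hgrad1
    simpa only [hunb1] using StrongConvexWithGrad.sum_integral_inner_le_of_isMinOn hsc hw hw1
      (isMinOn_univ_iff.2 hmin) hθh2int hgrad1
  have hrest := sum_mul_le_of_le_mul_sub_add hw hw1 fun m =>
    StrongConvexWithGrad.sum_integral_inner_le_of_local_steps (hsc m) (hFmin m) hμ.le hη0.le hη1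
      hτ (hθloc m) hθh2int (hL2 m) (hgbound m) (hip0int m) (hip1int m) (hip2int m) (hloc2int m) (hunbiased m)
  have hΓ' : ∑ m, w m * (F m θstar - Fmin m) = Γ := by
    simp only [mul_sub, sum_sub_distrib, hΓ, hFstar]
  simp only [← add_sum_Ioc_eq_sum_Icc hτ, mul_add, sum_add_distrib] at hupdate
  rw [hΓ'] at hrest
  have := mul_le_mul_of_nonneg_left (add_le_add hfirst hrest) (by positivity : 0 ≤ 2 * η)
  linarith

/-- one-step contraction bound for the global model update. -/
theorem stmt_16 {Ω : Type*} [MeasurableSpace Ω] (P : Measure Ω) [IsProbabilityMeasure P]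
    (d M τ : ℕ) (hd : 1 ≤ d) (hM : 1 ≤ M) (hτ : 1 ≤ τ)
    (μ G η : ℝ) (hμ : 0 < μ) (hG : 0 ≤ G) (hη0 : 0 < η) (hη1 : η ≤ 1)
    (w : Fin M → ℝ) (hw : ∀ m, 0 ≤ w m) (hw1 : ∑ m, w m = 1)
    (F : Fin M → EuclideanSpace ℝ (Fin d) → ℝ)
    (Gm : Fin M → EuclideanSpace ℝ (Fin d) → EuclideanSpace ℝ (Fin d))
    (hsc : ∀ m (v u : EuclideanSpace ℝ (Fin d)),
      2 * (F m v - F m u) ≥ 2 * ⟪v - u, Gm m u⟫_ℝ + μ * ‖v - u‖ ^ 2)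
    (θstar : EuclideanSpace ℝ (Fin d))
    (hmin : ∀ v, ∑ m, w m * F m θstar ≤ ∑ m, w m * F m v)
    (Fmin : Fin M → ℝ) (hFmin : ∀ m v, Fmin m ≤ F m v)
    (Fstar Γ : ℝ) (hFstar : Fstar = ∑ m, w m * F m θstar)
    (hΓ : Γ = Fstar - ∑ m, w m * Fmin m)
    (θh : Ω → EuclideanSpace ℝ (Fin d))
    (g : Fin M → ℕ → Ω → EuclideanSpace ℝ (Fin d))
    -- local SGD iterates: θ_m^i = θ̂ − η Σ_{j=1}^{i−1} g_{m,j} (so θ_m^1 = θ̂)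
    (θloc : Fin M → ℕ → Ω → EuclideanSpace ℝ (Fin d))
    (hθloc : ∀ m i ω, θloc m i ω = θh ω - η • ∑ j ∈ Icc 1 (i - 1), g m j ω)
    -- new global model: θ⁺ = θ̂ − η Σ_m w_m Σ_{i=1}^τ g_{m,i}
    (θplus : Ω → EuclideanSpace ℝ (Fin d))
    (hθplus : ∀ ω, θplus ω = θh ω - η • ∑ m, w m • ∑ i ∈ Icc 1 τ, g m i ω)
    -- integrability of all integrands appearing below
    (hθhint : Integrable θh P)
    (hgint : ∀ m, ∀ i ∈ Icc 1 τ, Integrable (fun ω => g m i ω) P)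
    (hg2int : ∀ m, ∀ i ∈ Icc 1 τ, Integrable (fun ω => ‖g m i ω‖ ^ 2) P)
    (hθh2int : Integrable (fun ω => ‖θh ω - θstar‖ ^ 2) P)
    (hθplus2int : Integrable (fun ω => ‖θplus ω - θstar‖ ^ 2) P)
    (hip0int : ∀ m, ∀ i ∈ Icc 1 τ,
      Integrable (fun ω => ⟪θstar - θh ω, g m i ω⟫_ℝ) P)
    (hip1int : ∀ m, ∀ i ∈ Icc 1 τ,
      Integrable (fun ω => ⟪θstar - θloc m i ω, g m i ω⟫_ℝ) P)
    (hip2int : ∀ m, ∀ i ∈ Icc 1 τ,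
      Integrable (fun ω => ⟪θstar - θloc m i ω, Gm m (θloc m i ω)⟫_ℝ) P)
    (hloc2int : ∀ m, ∀ i ∈ Icc 1 τ,
      Integrable (fun ω => ‖θloc m i ω - θstar‖ ^ 2) P)
    -- bounded second moments of the stochastic gradients
    (hgbound : ∀ m, ∀ i ∈ Icc 1 τ, ∫ ω, ‖g m i ω‖ ^ 2 ∂P ≤ G ^ 2)
    -- unbiasedness identities
    (hunbiased : ∀ m, ∀ i ∈ Icc 1 τ,
      ∫ ω, ⟪θstar - θloc m i ω, g m i ω⟫_ℝ ∂P
        = ∫ ω, ⟪θstar - θloc m i ω, Gm m (θloc m i ω)⟫_ℝ ∂P) :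
    ∫ ω, ‖θplus ω - θstar‖ ^ 2 ∂P
      ≤ (1 - μ * η * ((τ : ℝ) - η * ((τ : ℝ) - 1))) * ∫ ω, ‖θh ω - θstar‖ ^ 2 ∂P
        + η ^ 2 * ((τ : ℝ) ^ 2 + (τ : ℝ) - 1) * G ^ 2
        + (1 + μ * (1 - η)) * η ^ 2 * G ^ 2
            * ((τ : ℝ) * ((τ : ℝ) - 1) * (2 * (τ : ℝ) - 1) / 6)
        + 2 * η * ((τ : ℝ) - 1) * Γ :=
  stmt_16_general P d M τ hτ μ G η hμ hη0 hη1 w hw hw1 F Gm hsc θstar hmin Fmin hFmin Fstar Γ hFstar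
    hΓ θh g θloc hθloc θplus hθplus hgint hg2int hθh2int hip0int hip1int hip2int hloc2int hgbound
    hunbiased
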